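/- Let p be an odd prime and C = ⟨g(x) + u p(x), u ā(x)⟩ a nonzero skew cyclic code of length n over R = F_p[u]/(u^2) as in Theorem (case 3), where ā(x) is (up to unit) a polynomial of minimal degree in C (not monic in C's sense) and g(x)+up(x) has minimal degree r among monic polynomials of C and x^n − 1 = k(x)∗g(x). Then ā(x) divides g(x) mod u in F_p[x], and ((x^n − 1)/g(x)) ∗ u p(x) lies in the left submodule generated by u ā(x). -/

import Mathlib

open TrivSqZeroExt

theorem RingAut.one_apply' {R : Type*} [Ring R] (b : R) : (1 : RingAut R) b = b := rfl

/-- The skew polynomial ring `R[x;θ]`, as finitely supported coefficient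
sequences with multiplication twisted by the ring automorphism `θ`:
`(a x^i) * (b x^j) = a θ^i(b) x^{i+j}`. -/
def SkewPoly (R : Type*) [Ring R] (θ : RingAut R) : Type _ := ℕ →₀ R

namespace SkewPoly

variable {R : Type*} [Ring R] (θ : RingAut R)

/-- The skew-twisted convolution product. -/
noncomputable def mulAux (f g : ℕ →₀ R) : ℕ →₀ R :=
  f.sum fun i a => g.sum fun j b => Finsupp.single (i + j) (a * (θ ^ i) b)

theorem mulAux_zero_left (g : ℕ →₀ R) : mulAux θ 0 g = 0 := Finsupp.sum_zero_index

theorem mulAux_zero_right (f : ℕ →₀ R) : mulAux θ f 0 = 0 := by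
  simp [mulAux, Finsupp.sum_zero_index]

theorem mulAux_add_left (f f' g : ℕ →₀ R) :
    mulAux θ (f + f') g = mulAux θ f g + mulAux θ f' g := by
  unfold mulAux
  apply Finsupp.sum_add_index' <;> intros <;> simp [add_mul, Finsupp.single_add, Finsupp.sum_add]

theorem mulAux_add_right (f g g' : ℕ →₀ R) :
    mulAux θ f (g + g') = mulAux θ f g + mulAux θ f g' := by
  unfold mulAux
  rw [← Finsupp.sum_add]
  apply Finsupp.sum_congr
  intro i _
  apply Finsupp.sum_add_index' <;> intros <;> simp [mul_add, Finsupp.single_add]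

theorem one_mulAux (g : ℕ →₀ R) : mulAux θ (Finsupp.single 0 1) g = g := by
  unfold mulAux
  rw [Finsupp.sum_single_index]
  · simp [RingAut.one_apply', Finsupp.sum_single]
  · simp

theorem mulAux_one (f : ℕ →₀ R) : mulAux θ f (Finsupp.single 0 1) = f := by
  unfold mulAux
  have : ∀ i ∈ f.support, ((Finsupp.single 0 1 : ℕ →₀ R).sum fun j b =>
      Finsupp.single (i + j) (f i * (θ ^ i) b)) = Finsupp.single i (f i) := by
    intro i _
    rw [Finsupp.sum_single_index] <;> simp
  rw [Finsupp.sum_congr this, Finsupp.sum_single f]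

theorem mulAux_single_single (i j : ℕ) (a b : R) :
    mulAux θ (Finsupp.single i a) (Finsupp.single j b) =
      Finsupp.single (i + j) (a * (θ ^ i) b) := by
  unfold mulAux
  rw [Finsupp.sum_single_index, Finsupp.sum_single_index]
  · simp
  · rw [Finsupp.sum_single_index] <;> simp

theorem mulAux_assoc (f g h : ℕ →₀ R) :
    mulAux θ (mulAux θ f g) h = mulAux θ f (mulAux θ g h) := by
  induction f using Finsupp.induction_linear with
  | zero => simp [mulAux_zero_left]
  | add f f' hf hf' => simp [mulAux_add_left, hf, hf']
  | single i a =>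
    induction g using Finsupp.induction_linear with
    | zero => simp [mulAux_zero_left, mulAux_zero_right]
    | add g g' hg hg' => simp [mulAux_add_left, mulAux_add_right, hg, hg']
    | single j b =>
      induction h using Finsupp.induction_linear with
      | zero => simp [mulAux_zero_right]
      | add h h' hh hh' => simp [mulAux_add_right, hh, hh']
      | single k c =>
        rw [mulAux_single_single, mulAux_single_single, mulAux_single_single,
          mulAux_single_single]
        rw [add_assoc, mul_assoc, map_mul, pow_add]
        rfl

variable {θ}

noncomputable instance : AddCommGroup (SkewPoly R θ) := inferInstanceAs (AddCommGroup (ℕ →₀ R))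

/-- Reinterpret a skew polynomial as a finitely supported function. -/
def toFinsupp (f : SkewPoly R θ) : ℕ →₀ R := f

/-- Build a skew polynomial out of a finitely supported function. -/
def ofFinsupp (f : ℕ →₀ R) : SkewPoly R θ := f

noncomputable instance : Ring (SkewPoly R θ) where
  __ := (inferInstance : AddCommGroup (SkewPoly R θ))
  mul f g := mulAux θ (toFinsupp f) (toFinsupp g)
  one := Finsupp.single 0 1
  left_distrib f g h := mulAux_add_right θ (toFinsupp f) (toFinsupp g) (toFinsupp h)
  right_distrib f g h := mulAux_add_left θ (toFinsupp f) (toFinsupp g) (toFinsupp h)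
  zero_mul := mulAux_zero_left θ
  mul_zero := mulAux_zero_right θ
  mul_assoc := mulAux_assoc θ
  one_mul := one_mulAux θ
  mul_one := mulAux_one θ

variable (θ) in
/-- The constant skew polynomial `a`. -/
noncomputable def C (a : R) : SkewPoly R θ := ofFinsupp (Finsupp.single 0 a)

variable (θ) in
/-- The variable `x` of the skew polynomial ring. -/
noncomputable def X : SkewPoly R θ := ofFinsupp (Finsupp.single 1 1)

/-- The `n`-th coefficient of a skew polynomial. -/
def coeff (f : SkewPoly R θ) (n : ℕ) : R := toFinsupp f n

/-- The degree of a skew polynomial (`⊥` for the zero polynomial). -/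
def degree (f : SkewPoly R θ) : WithBot ℕ := (toFinsupp f).support.max

/-- The degree of a skew polynomial as a natural number. -/
def natDegree (f : SkewPoly R θ) : ℕ := (degree f).unbotD 0

/-- The leading coefficient of a skew polynomial. -/
def leadingCoeff (f : SkewPoly R θ) : R := coeff f (natDegree f)

/-- A skew polynomial is monic if its leading coefficient is `1`. -/
def Monic (f : SkewPoly R θ) : Prop := leadingCoeff f = 1

end SkewPoly

/-- The inclusion of `F_p[x]` into the skew polynomial ring
`(F_p + u F_p)[x;θ]` (coefficientwise `a ↦ a + u·0`); this is the natural
embedding of `F_p[x]` as a subring of `R[x;θ]` since `θ` fixes `F_p`. -/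
noncomputable def SkewPoly.ofPoly {p : ℕ}
    (θ : RingAut (DualNumber (ZMod p))) (f : Polynomial (ZMod p)) :
    SkewPoly (DualNumber (ZMod p)) θ :=
  SkewPoly.ofFinsupp
    (Finsupp.mapRange (inl : ZMod p → DualNumber (ZMod p)) (inl_zero (ZMod p)) f.toFinsupp.coeff)

/-- Reduction of a skew polynomial over `F_p + u F_p` modulo `u`, i.e. the
polynomial in `F_p[x]` whose coefficients are the first components of the
coefficients. -/
noncomputable def SkewPoly.fstPoly {p : ℕ}
    {θ : RingAut (DualNumber (ZMod p))} (f : SkewPoly (DualNumber (ZMod p)) θ) :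
    Polynomial (ZMod p) :=
  Polynomial.ofFinsupp (AddMonoidAlgebra.ofCoeff
    (Finsupp.mapRange TrivSqZeroExt.fst fst_zero (SkewPoly.toFinsupp f)))

/-!
Multiplication by `u` identifies `F_p[x]` with the left ideal `u R[x;θ]`. An automorphism `θ`
fixes `F_p` and, `F_p` being reduced, scales `u` by a nonzero constant, so `f ∗ u m = u (f̃ m)`
for a twisted reduction `f̃` of `f` modulo `u`, and every polynomial is such an `f̃`. Hence the
`u`-multiples in `C` are `u` times an ideal of `F_p[x]`, and division with remainder together
with the minimality of `deg u ā` shows that `ā` divides each of them. Both `u g = u (g + u p)`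
and `k ∗ u p = k ∗ (g + u p) − (xⁿ − 1)` are such elements of `C`.
-/

namespace SkewPoly

variable {R : Type*} [Ring R] {θ : RingAut R}

theorem ext_coeff {f g : SkewPoly R θ} (h : ∀ i, coeff f i = coeff g i) : f = g :=
  Finsupp.ext h

theorem coeff_zero (i : ℕ) : coeff (0 : SkewPoly R θ) i = 0 := rfl

theorem coeff_add (f g : SkewPoly R θ) (i : ℕ) : coeff (f + g) i = coeff f i + coeff g i := rfl

theorem coeff_ofFinsupp_single (i j : ℕ) (a : R) :
    coeff (ofFinsupp (Finsupp.single j a) : SkewPoly R θ) i = if j = i then a else 0 :=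
  Finsupp.single_apply

theorem ofFinsupp_single_mul_ofFinsupp_single (i j : ℕ) (a b : R) :
    (ofFinsupp (Finsupp.single i a) : SkewPoly R θ) * ofFinsupp (Finsupp.single j b) =
      ofFinsupp (Finsupp.single (i + j) (a * (θ ^ i) b)) :=
  mulAux_single_single θ i j a b

@[elab_as_elim]
theorem induction_linear {motive : SkewPoly R θ → Prop} (f : SkewPoly R θ) (zero : motive 0)
    (add : ∀ f g, motive f → motive g → motive (f + g))
    (single : ∀ i a, motive (ofFinsupp (Finsupp.single i a))) : motive f :=
  Finsupp.induction_linear (motive := motive) f zero add single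

theorem coeff_C_mul (a : R) (f : SkewPoly R θ) (i : ℕ) :
    coeff (C θ a * f) i = a * coeff f i := by
  induction f using induction_linear with
  | zero => rw [mul_zero, coeff_zero, mul_zero]
  | add f g hf hg => rw [mul_add, coeff_add, coeff_add, hf, hg, mul_add]
  | single j b =>
    rw [C, ofFinsupp_single_mul_ofFinsupp_single, coeff_ofFinsupp_single, coeff_ofFinsupp_single,
      zero_add, pow_zero, RingAut.one_apply']
    split_ifs <;> simp

end SkewPoly

namespace DualNumber

open TrivSqZeroExt

variable {p : ℕ}

theorem ringAut_apply_inl (θ : RingAut (DualNumber (ZMod p))) (a : ZMod p) :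
    θ (inl a) = inl a :=
  RingHom.congr_fun
    (RingHom.ext_zmod (θ.toRingHom.comp (inlHom (ZMod p) (ZMod p))) (inlHom (ZMod p) (ZMod p))) a

def ringAutScale (θ : RingAut (DualNumber (ZMod p))) : ZMod p := snd (θ ε)

variable [Fact p.Prime] (θ : RingAut (DualNumber (ZMod p)))

theorem ringAut_apply_eps : θ ε = inr (ringAutScale θ) := by
  have hsq : fst (θ ε) * fst (θ ε) = 0 := by
    rw [← fst_mul, ← map_mul, eps_mul_eps, map_zero, fst_zero]
  ext
  · exact mul_self_eq_zero.mp hsq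
  · rfl

theorem ringAutScale_ne_zero : ringAutScale θ ≠ 0 := by
  intro h
  have : θ ε = θ 0 := by rw [ringAut_apply_eps, h, inr_zero, map_zero]
  simpa using congrArg snd (θ.injective this)

theorem ringAut_apply_inr (b : ZMod p) : θ (inr b) = inr (ringAutScale θ * b) := by
  have : (inr b : DualNumber (ZMod p)) = inl b * ε := by ext <;> simp
  rw [this, map_mul, ringAut_apply_inl, ringAut_apply_eps]
  ext <;> simp [mul_comm]

end DualNumber

namespace SkewPoly

open Polynomial TrivSqZeroExt DualNumber

variable {p : ℕ} {θ : RingAut (DualNumber (ZMod p))}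

variable (θ) in
/-- The element `u m(x)` of `R[x;θ]` (the dual-number unit `ε` is the paper's `u`). -/
noncomputable def epsPoly (m : (ZMod p)[X]) : SkewPoly (DualNumber (ZMod p)) θ :=
  C θ ε * ofPoly θ m

theorem coeff_epsPoly (m : (ZMod p)[X]) (i : ℕ) : coeff (epsPoly θ m) i = inr (m.coeff i) := by
  rw [epsPoly, coeff_C_mul]
  ext <;> simp [ofPoly, coeff, toFinsupp, ofFinsupp, Polynomial.coeff]

theorem epsPoly_add (m₁ m₂ : (ZMod p)[X]) :
    epsPoly θ (m₁ + m₂) = epsPoly θ m₁ + epsPoly θ m₂ :=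
  ext_coeff fun i => by simp only [coeff_add, coeff_epsPoly, Polynomial.coeff_add, inr_add]

theorem epsPoly_monomial (j : ℕ) (d : ZMod p) :
    epsPoly θ (monomial j d) = ofFinsupp (Finsupp.single j (inr d)) :=
  ext_coeff fun i => by
    rw [coeff_epsPoly, coeff_ofFinsupp_single, Polynomial.coeff_monomial]
    split_ifs <;> simp

theorem epsPoly_eq_zero_iff {m : (ZMod p)[X]} : epsPoly θ m = 0 ↔ m = 0 := by
  refine ⟨fun h => Polynomial.ext fun i => inr_injective (R := ZMod p) ?_,
    fun h => ext_coeff fun i => ?_⟩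
  · rw [← coeff_epsPoly, h, coeff_zero, Polynomial.coeff_zero, inr_zero]
  · rw [coeff_epsPoly, h, coeff_zero, Polynomial.coeff_zero, inr_zero]

theorem degree_epsPoly (m : (ZMod p)[X]) : degree (epsPoly θ m) = m.degree := by
  have : (toFinsupp (epsPoly θ m)).support = m.support := by
    ext i
    rw [Finsupp.mem_support_iff, Polynomial.mem_support_iff, ← coeff, coeff_epsPoly,
      inr_injective.ne_iff' (inr_zero _)]
  rw [degree, this]
  rfl

theorem C_eps_mul (f : SkewPoly (DualNumber (ZMod p)) θ) : C θ ε * f = epsPoly θ (fstPoly f) :=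
  ext_coeff fun i => by
    rw [coeff_C_mul, coeff_epsPoly]
    ext <;> simp [fstPoly, coeff, Polynomial.coeff]

theorem C_eps_mul_C_eps : C θ ε * C θ ε = (0 : SkewPoly (DualNumber (ZMod p)) θ) :=
  ext_coeff fun i => by
    rw [coeff_C_mul, C, coeff_ofFinsupp_single]
    split_ifs <;> simp [eps_mul_eps, coeff_zero]

variable (θ) in
noncomputable def twistedFstPoly : SkewPoly (DualNumber (ZMod p)) θ →+ (ZMod p)[X] :=
  Finsupp.liftAddHom fun i =>
    { toFun := fun a => monomial i (ringAutScale (θ ^ i) * fst a)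
      map_zero' := by simp
      map_add' := by simp [mul_add] }

theorem twistedFstPoly_single (i : ℕ) (a : DualNumber (ZMod p)) :
    twistedFstPoly θ (ofFinsupp (Finsupp.single i a)) =
      monomial i (ringAutScale (θ ^ i) * fst a) :=
  Finsupp.liftAddHom_apply_single _ _ _

variable [Fact p.Prime]

theorem twistedFstPoly_surjective : Function.Surjective (twistedFstPoly θ) := by
  intro q
  induction q using Polynomial.induction_on' with
  | add q₁ q₂ h₁ h₂ =>
    obtain ⟨f₁, rfl⟩ := h₁
    obtain ⟨f₂, rfl⟩ := h₂
    exact ⟨f₁ + f₂, map_add _ _ _⟩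
  | monomial j d =>
    refine ⟨ofFinsupp (Finsupp.single j (inl ((ringAutScale (θ ^ j))⁻¹ * d))), ?_⟩
    rw [twistedFstPoly_single, fst_inl, mul_inv_cancel_left₀ (ringAutScale_ne_zero _)]

theorem mul_epsPoly (f : SkewPoly (DualNumber (ZMod p)) θ) (m : (ZMod p)[X]) :
    f * epsPoly θ m = epsPoly θ (twistedFstPoly θ f * m) := by
  induction f using induction_linear with
  | zero => rw [zero_mul, map_zero, zero_mul, epsPoly_eq_zero_iff.mpr rfl]
  | add f g hf hg => rw [add_mul, hf, hg, map_add, add_mul, epsPoly_add]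
  | single i a =>
    induction m using Polynomial.induction_on' with
    | add m₁ m₂ h₁ h₂ => rw [epsPoly_add, mul_add, h₁, h₂, mul_add, epsPoly_add]
    | monomial j d =>
      rw [epsPoly_monomial, ofFinsupp_single_mul_ofFinsupp_single, ringAut_apply_inr,
        twistedFstPoly_single, monomial_mul_monomial, epsPoly_monomial]
      congr 2
      ext <;> simp [mul_left_comm, mul_comm, mul_assoc]

theorem exists_mul_epsPoly_eq_of_dvd {a m : (ZMod p)[X]} (h : a ∣ m) :
    ∃ f : SkewPoly (DualNumber (ZMod p)) θ, f * epsPoly θ a = epsPoly θ m := by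
  obtain ⟨q, rfl⟩ := h
  obtain ⟨f, hf⟩ := twistedFstPoly_surjective (θ := θ) q
  exact ⟨f, by rw [mul_epsPoly, hf, mul_comm]⟩

theorem dvd_of_epsPoly_mem {J : Submodule (SkewPoly (DualNumber (ZMod p)) θ)
      (SkewPoly (DualNumber (ZMod p)) θ)} {a : (ZMod p)[X]} {N : ℕ}
    (ha : a.Monic) (haN : a.degree < N) (haJ : epsPoly θ a ∈ J)
    (hmin : ∀ b ∈ J, b ≠ 0 → degree b < N → degree (epsPoly θ a) ≤ degree b)
    {m : (ZMod p)[X]} (hm : epsPoly θ m ∈ J) : a ∣ m := by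
  rw [← modByMonic_eq_zero_iff_dvd ha]
  by_contra hr
  obtain ⟨f, hf⟩ := exists_mul_epsPoly_eq_of_dvd (θ := θ) (dvd_mul_right a (m /ₘ a))
  have hrJ : epsPoly θ (m %ₘ a) ∈ J := by
    have hsplit : epsPoly θ (m %ₘ a) = epsPoly θ m - f * epsPoly θ a := by
      rw [hf, eq_sub_iff_add_eq, ← epsPoly_add, modByMonic_add_div m a]
    rw [hsplit]
    exact J.sub_mem hm (J.smul_mem f haJ)
  have hlt := degree_modByMonic_lt m ha
  have hle := hmin _ hrJ (epsPoly_eq_zero_iff.not.mpr hr)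
    (by rw [degree_epsPoly]; exact hlt.trans haN)
  rw [degree_epsPoly, degree_epsPoly] at hle
  exact hle.not_gt hlt

end SkewPoly

open SkewPoly DualNumber in
theorem skew_code_mixed_divisibility_general (p : ℕ) (hp : p.Prime)
    (θ : RingAut (DualNumber (ZMod p))) (n : ℕ)
    (g : SkewPoly (DualNumber (ZMod p)) θ)
    (pp : Polynomial (ZMod p)) (abar : Polynomial (ZMod p)) (habar : abar.Monic)
    (r : ℕ) (hrn : r ≤ n)
    (ht : abar.natDegree < r)
    (Code : Submodule (SkewPoly (DualNumber (ZMod p)) θ)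
      (SkewPoly (DualNumber (ZMod p)) θ ⧸ Ideal.span {SkewPoly.X θ ^ n - 1}))
    (hCode : Code = Submodule.span (SkewPoly (DualNumber (ZMod p)) θ)
      {(Ideal.span {SkewPoly.X θ ^ n - 1}).mkQ (g + SkewPoly.C θ ε * SkewPoly.ofPoly θ pp),
       (Ideal.span {SkewPoly.X θ ^ n - 1}).mkQ (SkewPoly.C θ ε * SkewPoly.ofPoly θ abar)})
    (huamin : ∀ b : SkewPoly (DualNumber (ZMod p)) θ,
      (Ideal.span {SkewPoly.X θ ^ n - 1}).mkQ b ∈ Code → b ≠ 0 →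
        SkewPoly.degree b < (n : WithBot ℕ) →
        SkewPoly.degree (SkewPoly.C θ ε * SkewPoly.ofPoly θ abar) ≤ SkewPoly.degree b) :
    abar ∣ SkewPoly.fstPoly g ∧
    ∀ k : SkewPoly (DualNumber (ZMod p)) θ, SkewPoly.X θ ^ n - 1 = k * g →
      (Ideal.span {SkewPoly.X θ ^ n - 1}).mkQ (k * (SkewPoly.C θ ε * SkewPoly.ofPoly θ pp)) ∈
        Submodule.span (SkewPoly (DualNumber (ZMod p)) θ)
          {(Ideal.span {SkewPoly.X θ ^ n - 1}).mkQ (SkewPoly.C θ ε * SkewPoly.ofPoly θ abar)} := by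
  have : Fact p.Prime := ⟨hp⟩
  set G := g + C θ ε * ofPoly θ pp
  let J := Code.comap (Ideal.span {X θ ^ n - 1}).mkQ
  have hGJ : G ∈ J := by
    rw [Submodule.mem_comap, hCode]; exact Submodule.subset_span (by simp)
  have haJ : epsPoly θ abar ∈ J := by
    rw [Submodule.mem_comap, hCode]; exact Submodule.subset_span (by simp [epsPoly])
  have hIJ : X θ ^ n - 1 ∈ J := by
    rw [Submodule.mem_comap, Submodule.mkQ_apply,
      (Submodule.Quotient.mk_eq_zero _).mpr (Submodule.mem_span_singleton_self _)]
    exact Code.zero_mem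
  have hdeg : abar.degree < n :=
    Polynomial.degree_le_natDegree.trans_lt (by exact_mod_cast ht.trans_le hrn)
  have hdvd : ∀ m, epsPoly θ m ∈ J → abar ∣ m := fun m =>
    dvd_of_epsPoly_mem habar hdeg haJ huamin
  refine ⟨hdvd _ ?_, fun k hk => ?_⟩
  · have hεG : C θ ε * G = epsPoly θ (fstPoly g) := by
      rw [mul_add, C_eps_mul, ← mul_assoc, C_eps_mul_C_eps, zero_mul, add_zero]
    exact hεG ▸ J.smul_mem _ hGJ
  · have hkG : k * epsPoly θ pp = k * G - (X θ ^ n - 1) := by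
      rw [hk, mul_add, add_sub_cancel_left, epsPoly]
    have hmem : epsPoly θ (twistedFstPoly θ k * pp) ∈ J := by
      rw [← mul_epsPoly, hkG]
      exact J.sub_mem (J.smul_mem k hGJ) hIJ
    obtain ⟨f, hf⟩ := exists_mul_epsPoly_eq_of_dvd (θ := θ) (hdvd _ hmem)
    have hkf : k * (C θ ε * ofPoly θ pp) = f * epsPoly θ abar := by
      rw [hf, ← mul_epsPoly]; rfl
    rw [hkf, ← smul_eq_mul, map_smul]
    exact Submodule.smul_mem _ f (Submodule.mem_span_singleton_self _)

open SkewPoly DualNumber in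
/-- For the code `C = ⟨g(x) + u p(x), u ā(x)⟩` of case (3), where `u ā(x)` is
of minimal degree in `C`, `g(x) + u p(x)` is monic of minimal degree `r`
among monic polynomials of `C`, and `xⁿ - 1 = k∗g`, one has
`ā ∣ (g mod u)` in `F_p[x]` and `((xⁿ-1)/g) ∗ u p(x) ∈ ⟨u ā(x)⟩`. -/
theorem skew_code_mixed_divisibility (p : ℕ) (hp : p.Prime) (hodd : p ≠ 2)
    (θ : RingAut (DualNumber (ZMod p))) (n : ℕ) (hn : 0 < n)
    (g : SkewPoly (DualNumber (ZMod p)) θ)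
    (pp : Polynomial (ZMod p)) (abar : Polynomial (ZMod p)) (habar : abar.Monic)
    (r : ℕ) (hrn : r ≤ n)
    (hgmonic : SkewPoly.Monic (g + SkewPoly.C θ ε * SkewPoly.ofPoly θ pp))
    (hgdeg : SkewPoly.natDegree (g + SkewPoly.C θ ε * SkewPoly.ofPoly θ pp) = r)
    (ht : abar.natDegree < r)
    (Code : Submodule (SkewPoly (DualNumber (ZMod p)) θ)
      (SkewPoly (DualNumber (ZMod p)) θ ⧸ Ideal.span {SkewPoly.X θ ^ n - 1}))
    (hCode : Code = Submodule.span (SkewPoly (DualNumber (ZMod p)) θ)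
      {(Ideal.span {SkewPoly.X θ ^ n - 1}).mkQ (g + SkewPoly.C θ ε * SkewPoly.ofPoly θ pp),
       (Ideal.span {SkewPoly.X θ ^ n - 1}).mkQ (SkewPoly.C θ ε * SkewPoly.ofPoly θ abar)})
    (hua0 : SkewPoly.C θ ε * SkewPoly.ofPoly θ abar ≠ 0)
    (huamin : ∀ b : SkewPoly (DualNumber (ZMod p)) θ,
      (Ideal.span {SkewPoly.X θ ^ n - 1}).mkQ b ∈ Code → b ≠ 0 →
        SkewPoly.degree b < (n : WithBot ℕ) →
        SkewPoly.degree (SkewPoly.C θ ε * SkewPoly.ofPoly θ abar) ≤ SkewPoly.degree b)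
    (hgmin : ∀ b : SkewPoly (DualNumber (ZMod p)) θ,
      (Ideal.span {SkewPoly.X θ ^ n - 1}).mkQ b ∈ Code → SkewPoly.Monic b →
        SkewPoly.degree b < (n : WithBot ℕ) →
        SkewPoly.degree (g + SkewPoly.C θ ε * SkewPoly.ofPoly θ pp) ≤ SkewPoly.degree b)
    (hk : ∃ k : SkewPoly (DualNumber (ZMod p)) θ, SkewPoly.X θ ^ n - 1 = k * g) :
    abar ∣ SkewPoly.fstPoly g ∧
    ∀ k : SkewPoly (DualNumber (ZMod p)) θ, SkewPoly.X θ ^ n - 1 = k * g →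
      (Ideal.span {SkewPoly.X θ ^ n - 1}).mkQ (k * (SkewPoly.C θ ε * SkewPoly.ofPoly θ pp)) ∈
        Submodule.span (SkewPoly (DualNumber (ZMod p)) θ)
          {(Ideal.span {SkewPoly.X θ ^ n - 1}).mkQ (SkewPoly.C θ ε * SkewPoly.ofPoly θ abar)} :=
  skew_code_mixed_divisibility_general p hp θ n g pp abar habar r hrn ht Code hCode huamin
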